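/- Let ε > 0, δ ≥ 0, and let N, κ be positive integers with κ ≤ N−1. Let q′₀, …, q′_{N−1} be nonnegative reals and q″₀, …, q″_{N−1} be reals such that |q′_i − q″_i| ≤ δ·q′₀ for all 0 ≤ i ≤ κ and |q′_i − q″_i| ≤ δ·q′_{i−κ} for all κ < i ≤ N−1. Define A′ = q′₀ + ∑_{i=1}^{N−1} ε·(1+ε)^{i−1}·q′_i and A″ = q″₀ + ∑_{i=1}^{N−1} ε·(1+ε)^{i−1}·q″_i. Then |A′ − A″| ≤ δ·(1+ε)^κ·A′. -/

import Mathlib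

/-!
The weights `w i = ε (1 + ε)^(i - 1)` satisfy `w (i + κ) = (1 + ε)^κ w i` and
`1 + w 1 + ⋯ + w κ = (1 + ε)^κ`. Both hypotheses say `|q' i - q'' i| ≤ δ q' (i - κ)` with
truncated subtraction, so the bucket sum of the errors is at most `δ` times the bucket sum of
the shifted sequence `q' (· - κ)`, which is `(1 + ε)^κ` times a truncation of `A'`.
-/

open Finset

/-- The paper's `A'` is `bucketSum ε (N - 1) q'`. -/
def bucketSum (ε : ℝ) (n : ℕ) (q : ℕ → ℝ) : ℝ :=
  q 0 + ∑ i ∈ Icc 1 n, ε * (1 + ε) ^ (i - 1) * q i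

namespace bucketSum

variable {ε : ℝ} {n : ℕ} {q r : ℕ → ℝ}

theorem succ (ε : ℝ) (n : ℕ) (q : ℕ → ℝ) :
    bucketSum ε (n + 1) q = bucketSum ε n q + ε * (1 + ε) ^ n * q (n + 1) := by
  simp only [bucketSum, sum_Icc_succ_top (Nat.le_add_left 1 n), Nat.add_sub_cancel]
  ring

theorem sub (ε : ℝ) (n : ℕ) (q r : ℕ → ℝ) :
    bucketSum ε n (q - r) = bucketSum ε n q - bucketSum ε n r := by
  simp only [bucketSum, Pi.sub_apply, mul_sub, sum_sub_distrib]
  ring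

theorem const_mul (ε c : ℝ) (n : ℕ) (q : ℕ → ℝ) :
    bucketSum ε n (fun i ↦ c * q i) = c * bucketSum ε n q := by
  simp only [bucketSum, mul_add, mul_sum]
  congr 1
  exact sum_congr rfl fun _ _ ↦ by ring

theorem congr (h : ∀ i ≤ n, q i = r i) : bucketSum ε n q = bucketSum ε n r := by
  unfold bucketSum
  rw [h 0 n.zero_le, sum_congr rfl fun i hi ↦ by rw [h i (mem_Icc.mp hi).2]]

theorem mono (hε : 0 ≤ ε) (h : ∀ i ≤ n, q i ≤ r i) : bucketSum ε n q ≤ bucketSum ε n r :=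
  add_le_add (h 0 n.zero_le) <| sum_le_sum fun i hi ↦
    mul_le_mul_of_nonneg_left (h i (mem_Icc.mp hi).2) (by positivity)

theorem abs_le (hε : 0 ≤ ε) (n : ℕ) (q : ℕ → ℝ) :
    |bucketSum ε n q| ≤ bucketSum ε n (fun i ↦ |q i|) := by
  refine (abs_add_le _ _).trans (add_le_add_right ((abs_sum_le_sum_abs _ _).trans ?_) _)
  exact sum_le_sum fun i _ ↦ by rw [abs_mul, abs_of_nonneg (by positivity)]

theorem le_of_le {m : ℕ} (hε : 0 ≤ ε) (hmn : m ≤ n) (hq : ∀ i ≤ n, 0 ≤ q i) :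
    bucketSum ε m q ≤ bucketSum ε n q :=
  add_le_add_right (sum_le_sum_of_subset_of_nonneg (Icc_subset_Icc_right hmn)
    fun i hi _ ↦ mul_nonneg (by positivity) (hq i (mem_Icc.mp hi).2)) _

theorem one (ε : ℝ) (n : ℕ) : bucketSum ε n (fun _ ↦ 1) = (1 + ε) ^ n := by
  induction n with
  | zero => simp [bucketSum]
  | succ n ih => rw [succ, ih]; ring

theorem shift {κ : ℕ} (ε : ℝ) (hκ : κ ≤ n) (q : ℕ → ℝ) :
    bucketSum ε n (fun i ↦ q (i - κ)) = (1 + ε) ^ κ * bucketSum ε (n - κ) q := by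
  obtain ⟨m, rfl⟩ := Nat.exists_eq_add_of_le hκ
  rw [Nat.add_sub_cancel_left]
  clear hκ
  induction m with
  | zero =>
    have hconst : bucketSum ε κ (fun i ↦ q (i - κ)) = bucketSum ε κ (fun _ ↦ q 0 * 1) :=
      congr fun i hi ↦ by rw [Nat.sub_eq_zero_of_le hi, mul_one]
    rw [Nat.add_zero, hconst, const_mul, one]
    simp [bucketSum, mul_comm]
  | succ m ih =>
    rw [← add_assoc, succ, ih, succ, show κ + m + 1 - κ = m + 1 by omega, pow_add]
    ring

end bucketSum

theorem bucket_sum_approximation_general (ε δ : ℝ) (hε : 0 < ε) (hδ : 0 ≤ δ)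
    (N κ : ℕ) (hκ : κ ≤ N - 1)
    (q' q'' : ℕ → ℝ) (hq' : ∀ i ≤ N - 1, 0 ≤ q' i)
    (hlow : ∀ i ≤ κ, |q' i - q'' i| ≤ δ * q' 0)
    (hhigh : ∀ i, κ < i → i ≤ N - 1 → |q' i - q'' i| ≤ δ * q' (i - κ)) :
    |(q' 0 + ∑ i ∈ Icc 1 (N - 1), ε * (1 + ε) ^ (i - 1) * q' i)
        - (q'' 0 + ∑ i ∈ Icc 1 (N - 1), ε * (1 + ε) ^ (i - 1) * q'' i)|
      ≤ δ * (1 + ε) ^ κ * (q' 0 + ∑ i ∈ Icc 1 (N - 1), ε * (1 + ε) ^ (i - 1) * q' i) := by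
  change |bucketSum ε (N - 1) q' - bucketSum ε (N - 1) q''|
    ≤ δ * (1 + ε) ^ κ * bucketSum ε (N - 1) q'
  have herr : ∀ i ≤ N - 1, |(q' - q'') i| ≤ δ * q' (i - κ) := fun i hi ↦ by
    rcases le_or_gt i κ with hiκ | hiκ
    · simpa [Nat.sub_eq_zero_of_le hiκ] using hlow i hiκ
    · exact hhigh i hiκ hi
  calc |bucketSum ε (N - 1) q' - bucketSum ε (N - 1) q''|
      = |bucketSum ε (N - 1) (q' - q'')| := by rw [bucketSum.sub]
    _ ≤ bucketSum ε (N - 1) (fun i ↦ δ * q' (i - κ)) :=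
      (bucketSum.abs_le hε.le _ _).trans (bucketSum.mono hε.le herr)
    _ = δ * (1 + ε) ^ κ * bucketSum ε (N - 1 - κ) q' := by
      rw [bucketSum.const_mul, bucketSum.shift ε hκ, mul_assoc]
    _ ≤ δ * (1 + ε) ^ κ * bucketSum ε (N - 1) q' := by
      gcongr
      exact bucketSum.le_of_le hε.le (Nat.sub_le _ _) hq'

/-- If the reals `q'' i` approximate the nonnegative reals `q' i` in the sense that
`|q' i - q'' i| ≤ δ · q' 0` for `0 ≤ i ≤ κ` and `|q' i - q'' i| ≤ δ · q' (i - κ)` for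
`κ < i ≤ N - 1`, then the corresponding geometric-bucket sums `A'` and `A''` satisfy
`|A' - A''| ≤ δ · (1+ε)^κ · A'`. -/
theorem bucket_sum_approximation (ε δ : ℝ) (hε : 0 < ε) (hδ : 0 ≤ δ)
    (N κ : ℕ) (hN : 0 < N) (hκpos : 0 < κ) (hκ : κ ≤ N - 1)
    (q' q'' : ℕ → ℝ) (hq' : ∀ i ≤ N - 1, 0 ≤ q' i)
    (hlow : ∀ i ≤ κ, |q' i - q'' i| ≤ δ * q' 0)
    (hhigh : ∀ i, κ < i → i ≤ N - 1 → |q' i - q'' i| ≤ δ * q' (i - κ)) :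
    |(q' 0 + ∑ i ∈ Icc 1 (N - 1), ε * (1 + ε) ^ (i - 1) * q' i)
        - (q'' 0 + ∑ i ∈ Icc 1 (N - 1), ε * (1 + ε) ^ (i - 1) * q'' i)|
      ≤ δ * (1 + ε) ^ κ * (q' 0 + ∑ i ∈ Icc 1 (N - 1), ε * (1 + ε) ^ (i - 1) * q' i) :=
  bucket_sum_approximation_general ε δ hε hδ N κ hκ q' q'' hq' hlow hhigh
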